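/- Every parity game with finitely many priorities is uniformly memoryless determined: there exist a Player-0 memoryless strategy σ and a Player-1 memoryless strategy τ such that W₀ᵐ(G,σ) ∪ W₁ᵐ(G,τ) = V. -/

import Mathlib

/-- A run in the graph `(V, E)`: an infinite `E`-path. -/
def IsRun {V : Type*} (E : Set (V × V)) (ρ : ℕ → V) : Prop :=
  ∀ n, (ρ n, ρ (n + 1)) ∈ E

/-- A run is compatible with a strategy `σ` of the player controlling `Vi`. -/
def Compatible {V : Type*} (Vi : Set V) (σ : V → V) (ρ : ℕ → V) : Prop :=
  ∀ n, ρ n ∈ Vi → ρ (n + 1) = σ (ρ n)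

/-- A memoryless strategy for the player controlling `Vi` (encoded as a total
function whose values matter only on `Vi`). -/
def IsStrategy {V : Type*} (Vi : Set V) (E : Set (V × V)) (σ : V → V) : Prop :=
  ∀ v ∈ Vi, (v, σ v) ∈ E

/-- The strategy `σ` of the player controlling `Vi` whose winning condition is
`Win` wins from `v`: every compatible run from `v` has its color sequence in `Win`. -/
def WinsFrom {V : Type*} {C : Type*} (Vi : Set V) (E : Set (V × V)) (π : V → C)
    (Win : Set (ℕ → C)) (σ : V → V) (v : V) : Prop :=
  ∀ ρ : ℕ → V, ρ 0 = v → IsRun E ρ → Compatible Vi σ ρ → (fun n => π (ρ n)) ∈ Win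

/-- `Wᵢᵐ(G, σ)`: the vertices from which `σ` wins. -/
def WinRegion {V : Type*} {C : Type*} (Vi : Set V) (E : Set (V × V)) (π : V → C)
    (Win : Set (ℕ → C)) (σ : V → V) : Set V :=
  {v | WinsFrom Vi E π Win σ v}

/-- `Wᵢᵐ(G)`: the vertices from which some memoryless strategy wins. -/
def WinRegionAll {V : Type*} {C : Type*} (Vi : Set V) (E : Set (V × V)) (π : V → C)
    (Win : Set (ℕ → C)) : Set V :=
  {v | ∃ σ, IsStrategy Vi E σ ∧ WinsFrom Vi E π Win σ v}

/-- Concatenation `w·ρ` of a finite word and an infinite sequence. -/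
def ListAppend {C : Type*} (w : List C) (ρ : ℕ → C) : ℕ → C :=
  fun n => if h : n < w.length then w.get ⟨n, h⟩ else ρ (n - w.length)

/-- `W` is prefix-independent: `wρ ∈ W ↔ ρ ∈ W`. -/
def PrefixIndependent {C : Type*} (W : Set (ℕ → C)) : Prop :=
  ∀ (w : List C) (ρ : ℕ → C), ListAppend w ρ ∈ W ↔ ρ ∈ W

/-- Uniform memoryless determinacy of the game `⟨V₀, V₁, E, π, W⟩`. -/
def UniformlyDetermined {V : Type*} {C : Type*} (V0 V1 : Set V) (E : Set (V × V))
    (π : V → C) (W : Set (ℕ → C)) : Prop :=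
  ∃ σ τ, IsStrategy V0 E σ ∧ IsStrategy V1 E τ ∧
    WinRegion V0 E π W σ ∪ WinRegion V1 E π Wᶜ τ = Set.univ

/-- The set of values occurring infinitely often in `u`. -/
def InfOcc (u : ℕ → ℕ) : Set ℕ := {k | ∀ N, ∃ n, N ≤ n ∧ u n = k}

/-- `max_∞(u)`: the maximal value occurring infinitely often (as `sSup`,
well defined for bounded `u`). -/
noncomputable def MaxInf (u : ℕ → ℕ) : ℕ := sSup (InfOcc u)

/-- The parity winning condition for Player 0: `max_∞` is even. -/
def ParityWin : Set (ℕ → ℕ) := {u | Even (MaxInf u)}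

/-- A vertex is absorbing if its only outgoing edge is a self-loop. -/
def Absorbing {V : Type*} (E : Set (V × V)) (v : V) : Prop :=
  {u | (v, u) ∈ E} = {v}

/-- A vertex is vanishing if it has no incoming edge. -/
def Vanishing {V : Type*} (E : Set (V × V)) (v : V) : Prop :=
  ∀ u, (u, v) ∉ E

/-- A vertex is relevant if it is neither absorbing nor vanishing. -/
def Relevant {V : Type*} (E : Set (V × V)) (v : V) : Prop :=
  ¬ Absorbing E v ∧ ¬ Vanishing E v


/-!
Zielonka's induction on the largest priority `d`, run with memoryless winning regions so that it
works on infinite arenas. For a prefix-independent condition the memoryless winning strategies of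
a player merge into a single one, so the memoryless winning region `L` of the opponent of the
player favoured by `d` is closed under one-step predecessors, and its complement `X` is a trap for
the opponent. Inside `X`, remove the player's attractor to priority `d`. The rest has smaller
priorities, so it is determined by induction, and the opponent wins nowhere in it: a strategy
winning there would combine with one on `L` into a win outside `L`. Hence the player wins on the
rest, and with the attractor strategy on all of `X`, since a play that does not end up in the rest
sees priority `d` infinitely often.
-/

universe u

section PrefixIndependent

variable {C : Type*} {W : Set (ℕ → C)}

lemma listAppend_ofFn (x : ℕ → C) (k : ℕ) :
    ListAppend (List.ofFn fun i : Fin k => x i) (fun n => x (n + k)) = x := by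
  funext n
  simp only [ListAppend, List.length_ofFn]
  split_ifs with h
  · simp
  · congr 1; omega

lemma PrefixIndependent.shift_mem_iff (hW : PrefixIndependent W) (x : ℕ → C) (k : ℕ) :
    (fun n => x (n + k)) ∈ W ↔ x ∈ W := by
  conv_rhs => rw [← listAppend_ofFn x k]
  exact (hW _ _).symm

lemma PrefixIndependent.compl (hW : PrefixIndependent W) : PrefixIndependent Wᶜ :=
  fun w x => (hW w x).not

lemma infOcc_listAppend (w : List ℕ) (x : ℕ → ℕ) : InfOcc (ListAppend w x) = InfOcc x := by
  ext k
  constructor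
  · intro h N
    obtain ⟨n, hn, hk⟩ := h (N + w.length)
    refine ⟨n - w.length, by omega, ?_⟩
    rwa [ListAppend, dif_neg (by omega)] at hk
  · intro h N
    obtain ⟨n, hn, hk⟩ := h N
    refine ⟨n + w.length, by omega, ?_⟩
    rwa [ListAppend, dif_neg (by omega), Nat.add_sub_cancel]

lemma prefixIndependent_parityWin : PrefixIndependent ParityWin := by
  intro w x
  simp only [ParityWin, MaxInf, infOcc_listAppend, Set.mem_ofPred_eq]

lemma maxInf_eq_of_frequently_eq {x : ℕ → ℕ} {d : ℕ} (hle : ∀ n, x n ≤ d)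
    (hfreq : ∀ N, ∃ n, N ≤ n ∧ x n = d) : MaxInf x = d := by
  have hbdd : ∀ k ∈ InfOcc x, k ≤ d := fun k hk => by
    obtain ⟨n, -, rfl⟩ := hk 0
    exact hle n
  exact le_antisymm (csSup_le ⟨d, hfreq⟩ hbdd) (le_csSup ⟨d, hbdd⟩ hfreq)

end PrefixIndependent

section Strategies

variable {V : Type u} {C : Type*} {Vi : Set V} {E : Set (V × V)} {π : V → C} {W : Set (ℕ → C)}
  {σ : V → V} {ρ : ℕ → V}

lemma WinsFrom.mem_of_tail (hW : PrefixIndependent W) {k : ℕ}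
    (hk : WinsFrom Vi E π W σ (ρ k)) (hρ : IsRun E ρ)
    (hcomp : ∀ n, k ≤ n → ρ n ∈ Vi → ρ (n + 1) = σ (ρ n)) : (fun n => π (ρ n)) ∈ W := by
  rw [← hW.shift_mem_iff _ k]
  refine hk (fun n => ρ (n + k)) (by simp) (fun n => ?_) (fun n hn => ?_)
  · simpa only [Nat.add_right_comm n 1 k] using hρ (n + k)
  · simpa only [Nat.add_right_comm n 1 k] using hcomp (n + k) (by omega) hn

lemma WinsFrom.of_edge (hW : PrefixIndependent W) {v w : V} (hv : WinsFrom Vi E π W σ v)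
    (hvw : (v, w) ∈ E) (hσ : v ∈ Vi → w = σ v) : WinsFrom Vi E π W σ w := by
  intro ρ h0 hρ hcomp
  let ρ' : ℕ → V := fun n => if n = 0 then v else ρ (n - 1)
  have hρ' : ∀ n, ρ' (n + 1) = ρ n := fun n => by simp [ρ']
  have hρ'run : IsRun E ρ' := by
    rintro (_ | n)
    · simpa [hρ', ρ', h0] using hvw
    · simpa only [hρ'] using hρ n
  have hρ'comp : Compatible Vi σ ρ' := by
    rintro (_ | n) hn
    · simpa [hρ', ρ', h0] using hσ hn
    · simpa only [hρ'] using hcomp n (by simpa only [hρ'] using hn)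
  simpa only [hρ'] using (hW.shift_mem_iff _ 1).2 (hv ρ' rfl hρ'run hρ'comp)

lemma mem_of_compatible_on_winRegion (hW : PrefixIndependent W) {k : ℕ}
    (hk : ρ k ∈ WinRegion Vi E π W σ) (hρ : IsRun E ρ)
    (hcomp : ∀ n, k ≤ n → ρ n ∈ WinRegion Vi E π W σ → ρ n ∈ Vi → ρ (n + 1) = σ (ρ n)) :
    (fun n => π (ρ n)) ∈ W := by
  have hin : ∀ n, k ≤ n → ρ n ∈ WinRegion Vi E π W σ := by
    intro n hn
    induction n, hn using Nat.le_induction with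
    | base => exact hk
    | succ n hn ih => exact WinsFrom.of_edge hW ih (hρ n) (hcomp n hn ih)
  exact WinsFrom.mem_of_tail hW hk hρ fun n hn => hcomp n hn (hin n hn)

end Strategies

section Uniformization

variable {V : Type u} {C : Type*} {Vi : Set V} {E : Set (V × V)} {π : V → C} {W : Set (ℕ → C)}

lemma exists_isStrategy (hE : ∀ v, ∃ w, (v, w) ∈ E) : ∃ σ, IsStrategy Vi E σ :=
  ⟨fun v => (hE v).choose, fun v _ => (hE v).choose_spec⟩

lemma winRegion_subset_winRegionAll {σ : V → V} (hσ : IsStrategy Vi E σ) :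
    WinRegion Vi E π W σ ⊆ WinRegionAll Vi E π W :=
  fun _ hv => ⟨σ, hσ, hv⟩

/-- Well-order the vertices and let `σ` play, at `v`, the strategy of the least vertex whose
chosen strategy wins from `v`. Along a play of `σ` this least vertex can only decrease, so it is
eventually constant, and from then on the play follows a single winning strategy. -/
theorem exists_uniform_strategy (hW : PrefixIndependent W) (hE : ∀ v, ∃ w, (v, w) ∈ E) :
    ∃ σ, IsStrategy Vi E σ ∧ WinRegionAll Vi E π W ⊆ WinRegion Vi E π W σ := by
  set R := WinRegionAll Vi E π W
  let _ : LinearOrder V := WellOrderingRel.isWellOrder.linearOrder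
  have _ : WellFoundedLT V := ⟨WellOrderingRel.isWellOrder.wf⟩
  obtain ⟨σ₀, hσ₀⟩ := exists_isStrategy (Vi := Vi) hE
  have hstr : ∀ w, ∃ s, IsStrategy Vi E s ∧ (w ∈ R → WinsFrom Vi E π W s w) := fun w => by
    by_cases hw : w ∈ R
    · obtain ⟨s, hs, hsw⟩ := hw
      exact ⟨s, hs, fun _ => hsw⟩
    · exact ⟨σ₀, hσ₀, fun h => absurd h hw⟩
  choose str hstr hstrw using hstr
  have hleast : ∀ v, ∃ w, v ∈ R →
      w ∈ R ∧ WinsFrom Vi E π W (str w) v ∧ ∀ w' ∈ R, WinsFrom Vi E π W (str w') v → w ≤ w' :=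
    fun v => by
      by_cases hv : v ∈ R
      · obtain ⟨w, ⟨hw, hwv⟩, hmin⟩ :=
          wellFounded_lt.has_min {w | w ∈ R ∧ WinsFrom Vi E π W (str w) v} ⟨v, hv, hstrw v hv⟩
        exact ⟨w, fun _ => ⟨hw, hwv, fun w' hw' hw'v => not_lt.1 (hmin w' ⟨hw', hw'v⟩)⟩⟩
      · exact ⟨v, fun h => absurd h hv⟩
  choose g hgR hgwin hgmin using hleast
  refine ⟨fun v => str (g v) v, fun v hv => hstr (g v) v hv, fun v hv ρ h0 hρ hcomp => ?_⟩
  have hstep : ∀ n, ρ n ∈ R → WinsFrom Vi E π W (str (g (ρ n))) (ρ (n + 1)) := fun n hn =>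
    (hgwin _ hn).of_edge hW (hρ n) (hcomp n)
  have hR : ∀ n, ρ n ∈ R := by
    intro n
    induction n with
    | zero => rwa [h0]
    | succ n ih => exact ⟨_, hstr _, hstep n ih⟩
  have hanti : Antitone fun n => g (ρ n) := antitone_nat_of_succ_le fun n =>
    hgmin _ (hR (n + 1)) _ (hgR _ (hR n)) (hstep n (hR n))
  obtain ⟨n₀, hn₀⟩ := WellFoundedLT.antitone_chain_condition hanti
  refine (hgwin _ (hR n₀)).mem_of_tail hW hρ fun n hn hn' => ?_
  rw [hcomp n hn', hn₀ n hn]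

end Uniformization

section Closure

variable {V : Type u} {C : Type*} {Vi : Set V} {E : Set (V × V)} {π : V → C} {W : Set (ℕ → C)}

lemma mem_winRegionAll_of_edge (hW : PrefixIndependent W) (hE : ∀ v, ∃ w, (v, w) ∈ E) {v w : V}
    (hv : v ∈ Vi) (hvw : (v, w) ∈ E) (hw : w ∈ WinRegionAll Vi E π W) :
    v ∈ WinRegionAll Vi E π W := by
  classical
  obtain ⟨τ, hτ, hτR⟩ := exists_uniform_strategy (π := π) hW hE
  by_cases hvτ : v ∈ WinRegion Vi E π W τ
  · exact winRegion_subset_winRegionAll hτ hvτ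
  refine ⟨Function.update τ v w, fun x hx => ?_, fun ρ h0 hρ hcomp => ?_⟩
  · rcases eq_or_ne x v with rfl | hxv
    · simpa using hvw
    · simpa [hxv] using hτ x hx
  have h1 : ρ 1 = w := by simpa [h0] using hcomp 0 (h0 ▸ hv)
  -- the play never returns to `v`, where `τ` and its update differ
  refine mem_of_compatible_on_winRegion hW (k := 1) (h1 ▸ hτR hw) hρ fun n _ hn hn' => ?_
  rw [hcomp n hn', Function.update_of_ne (by rintro rfl; exact hvτ hn)]

lemma mem_winRegionAll_of_forall_edge (hW : PrefixIndependent W) (hE : ∀ v, ∃ w, (v, w) ∈ E)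
    {v : V} (hall : ∀ w, (v, w) ∈ E → w ∈ WinRegionAll Vi E π W) :
    v ∈ WinRegionAll Vi E π W := by
  obtain ⟨τ, hτ, hτR⟩ := exists_uniform_strategy (π := π) hW hE
  refine ⟨τ, hτ, fun ρ h0 hρ hcomp => ?_⟩
  exact (hτR (hall _ (h0 ▸ hρ 0))).mem_of_tail hW (k := 1) hρ fun n _ => hcomp n

end Closure

section Determinacy

variable {V : Type u} {C : Type*}

def MemorylessDetermined (Vi : Set V) (E : Set (V × V)) (π : V → C) (W : Set (ℕ → C)) : Prop :=
  WinRegionAll Vi E π W ∪ WinRegionAll Viᶜ E π Wᶜ = Set.univ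

lemma memorylessDetermined_compl_iff {Vi : Set V} {E : Set (V × V)} {π : V → C}
    {W : Set (ℕ → C)} : MemorylessDetermined Viᶜ E π Wᶜ ↔ MemorylessDetermined Vi E π W := by
  rw [MemorylessDetermined, MemorylessDetermined, compl_compl, compl_compl, Set.union_comm]

lemma MemorylessDetermined.uniformlyDetermined {Vi : Set V} {E : Set (V × V)} {π : V → C}
    {W : Set (ℕ → C)} (h : MemorylessDetermined Vi E π W) (hW : PrefixIndependent W)
    (hE : ∀ v, ∃ w, (v, w) ∈ E) : UniformlyDetermined Vi Viᶜ E π W := by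
  obtain ⟨σ, hσ, hσR⟩ := exists_uniform_strategy (Vi := Vi) (π := π) hW hE
  obtain ⟨τ, hτ, hτR⟩ := exists_uniform_strategy (Vi := Viᶜ) (π := π) hW.compl hE
  refine ⟨σ, τ, hσ, hτ, Set.eq_univ_of_univ_subset ?_⟩
  rw [← h]
  exact Set.union_subset_union hσR hτR

end Determinacy

section Attractor

variable {V : Type u}

def attrStep (Vi : Set V) (E : Set (V × V)) (T S : Set V) : Set V :=
  T ∪ {v | (v ∈ Vi ∧ ∃ w, (v, w) ∈ E ∧ w ∈ S) ∨ (v ∉ Vi ∧ ∀ w, (v, w) ∈ E → w ∈ S)}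

/-- Indexed by ordinals since `V` may be infinite and infinitely branching. -/
noncomputable def attrApprox (Vi : Set V) (E : Set (V × V)) (T : Set V) : Ordinal.{u} → Set V :=
  fun α => attrStep Vi E T (⋃ β : {β : Ordinal.{u} // β < α}, attrApprox Vi E T β.1)
termination_by α => α
decreasing_by exact β.2

def Attr (Vi : Set V) (E : Set (V × V)) (T : Set V) : Set V :=
  {v | ∃ α, v ∈ attrApprox Vi E T α}

noncomputable def attrRank (Vi : Set V) (E : Set (V × V)) (T : Set V) (v : V) : Ordinal.{u} :=
  sInf {α | v ∈ attrApprox Vi E T α}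

variable {Vi : Set V} {E : Set (V × V)} {T : Set V}

lemma attrApprox_eq (α : Ordinal.{u}) :
    attrApprox Vi E T α =
      attrStep Vi E T (⋃ β : {β : Ordinal.{u} // β < α}, attrApprox Vi E T β.1) := by
  rw [attrApprox]

lemma mem_attrApprox_attrRank {v : V} (h : v ∈ Attr Vi E T) :
    v ∈ attrApprox Vi E T (attrRank Vi E T v) :=
  csInf_mem h

lemma attrRank_le {v : V} {α : Ordinal.{u}} (h : v ∈ attrApprox Vi E T α) :
    attrRank Vi E T v ≤ α :=
  csInf_le' h

lemma subset_attr : T ⊆ Attr Vi E T :=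
  fun _ hv => ⟨0, by rw [attrApprox_eq]; exact Or.inl hv⟩

lemma mem_attr_of_edge {v w : V} (hv : v ∈ Vi) (hvw : (v, w) ∈ E) (hw : w ∈ Attr Vi E T) :
    v ∈ Attr Vi E T := by
  refine ⟨attrRank Vi E T w + 1, ?_⟩
  rw [attrApprox_eq]
  exact Or.inr (Or.inl ⟨hv, w, hvw, Set.mem_iUnion.2
    ⟨⟨attrRank Vi E T w, lt_add_one _⟩, mem_attrApprox_attrRank hw⟩⟩)

lemma mem_attr_of_forall_edge {v : V} (hv : v ∉ Vi) (hall : ∀ w, (v, w) ∈ E → w ∈ Attr Vi E T) :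
    v ∈ Attr Vi E T := by
  let r : {w // (v, w) ∈ E} → Ordinal.{u} := fun w => attrRank Vi E T w
  refine ⟨(⨆ w, r w) + 1, ?_⟩
  rw [attrApprox_eq]
  refine Or.inr (Or.inr ⟨hv, fun w hvw => Set.mem_iUnion.2 ?_⟩)
  exact ⟨⟨r ⟨w, hvw⟩, (Ordinal.le_iSup r ⟨w, hvw⟩).trans_lt (lt_add_one _)⟩,
    mem_attrApprox_attrRank (hall w hvw)⟩

lemma mem_sdiff_attr_of_edge {X : Set V} {v w : V} (hv : v ∈ X \ Attr Vi (E ∩ X ×ˢ X) T)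
    (hvi : v ∈ Vi) (hvw : (v, w) ∈ E) (hw : w ∈ X) : w ∈ X \ Attr Vi (E ∩ X ×ˢ X) T :=
  ⟨hw, fun hwA => hv.2 (mem_attr_of_edge hvi ⟨hvw, hv.1, hw⟩ hwA)⟩

lemma exists_edge_mem_sdiff_attr {X : Set V} {v : V} (hv : v ∈ X \ Attr Vi (E ∩ X ×ˢ X) T)
    (hvi : v ∉ Vi) : ∃ w, (v, w) ∈ E ∧ w ∈ X \ Attr Vi (E ∩ X ×ˢ X) T := by
  by_contra! h
  refine hv.2 (mem_attr_of_forall_edge hvi fun w hvw => ?_)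
  by_contra hwA
  exact h w hvw.1 ⟨hvw.2.2, hwA⟩

lemma mem_attr_cases {v : V} (hv : v ∈ Attr Vi E T) (hT : v ∉ T) :
    (v ∈ Vi ∧ ∃ w, (v, w) ∈ E ∧ w ∈ Attr Vi E T ∧ attrRank Vi E T w < attrRank Vi E T v) ∨
    (v ∉ Vi ∧ ∀ w, (v, w) ∈ E → w ∈ Attr Vi E T ∧ attrRank Vi E T w < attrRank Vi E T v) := by
  have h := mem_attrApprox_attrRank hv
  rw [attrApprox_eq] at h
  have hlt : ∀ {w}, w ∈ ⋃ β : {β : Ordinal.{u} // β < attrRank Vi E T v}, attrApprox Vi E T β.1 →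
      w ∈ Attr Vi E T ∧ attrRank Vi E T w < attrRank Vi E T v := fun hw => by
    obtain ⟨⟨β, hβ⟩, hw⟩ := Set.mem_iUnion.1 hw
    exact ⟨⟨β, hw⟩, (attrRank_le hw).trans_lt hβ⟩
  rcases h with hT' | ⟨hvi, w, hvw, hw⟩ | ⟨hvi, hall⟩
  · exact absurd hT' hT
  · exact Or.inl ⟨hvi, w, hvw, hlt hw⟩
  · exact Or.inr ⟨hvi, fun w hvw => hlt (hall w hvw)⟩

lemma exists_mem_of_mem_attr {σ : V → V}
    (hσ : ∀ v ∈ Attr Vi E T, v ∉ T → v ∈ Vi →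
      σ v ∈ Attr Vi E T ∧ attrRank Vi E T (σ v) < attrRank Vi E T v)
    {ρ : ℕ → V} (hρ : IsRun E ρ) (hcomp : Compatible Vi σ ρ) {n : ℕ} (hn : ρ n ∈ Attr Vi E T) :
    ∃ m, n ≤ m ∧ ρ m ∈ T := by
  induction h : attrRank Vi E T (ρ n) using WellFoundedLT.induction generalizing n with
  | ind α ih =>
    by_cases hT : ρ n ∈ T
    · exact ⟨n, le_rfl, hT⟩
    have hnext : ρ (n + 1) ∈ Attr Vi E T ∧ attrRank Vi E T (ρ (n + 1)) < α := by
      rcases mem_attr_cases hn hT with ⟨hvi, -⟩ | ⟨-, hall⟩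
      · exact hcomp n hvi ▸ h ▸ hσ _ hn hT hvi
      · exact h ▸ hall _ (hρ n)
    obtain ⟨m, hm, hmT⟩ := ih _ hnext.2 hnext.1 rfl
    exact ⟨m, by omega, hmT⟩

end Attractor

section Subarena

variable {V : Type u} {C : Type*} {Vi : Set V} {E : Set (V × V)} {π : V → C} {W : Set (ℕ → C)}

def restrictEdges (E : Set (V × V)) (S : Set V) : Set (S × S) :=
  {p | ((p.1 : V), (p.2 : V)) ∈ E}

open scoped Classical in
noncomputable def extendStrategy (S : Set V) (σS : S → S) (σ : V → V) : V → V :=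
  fun v => if h : v ∈ S then σS ⟨v, h⟩ else σ v

lemma extendStrategy_of_mem {S : Set V} (σS : S → S) (σ : V → V) {v : V} (h : v ∈ S) :
    extendStrategy S σS σ v = σS ⟨v, h⟩ := by
  simp [extendStrategy, h]

lemma extendStrategy_of_notMem {S : Set V} (σS : S → S) (σ : V → V) {v : V} (h : v ∉ S) :
    extendStrategy S σS σ v = σ v := by
  simp [extendStrategy, h]

lemma IsStrategy.extendStrategy {S : Set V} {σS : S → S} {σ : V → V}
    (hσS : IsStrategy (Subtype.val ⁻¹' Vi) (restrictEdges E S) σS) (hσ : IsStrategy Vi E σ) :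
    IsStrategy Vi E (extendStrategy S σS σ) := fun v hv => by
  by_cases h : v ∈ S
  · rw [extendStrategy_of_mem σS σ h]
    exact hσS ⟨v, h⟩ hv
  · rw [extendStrategy_of_notMem σS σ h]
    exact hσ v hv

lemma WinsFrom.mem_of_restrictEdges (hW : PrefixIndependent W) {S : Set V} {σS : S → S}
    {σ : V → V} {x : S}
    (hx : WinsFrom (Subtype.val ⁻¹' Vi) (restrictEdges E S) (fun y => π y) W σS x)
    {ρ : ℕ → V} {k : ℕ} (hk : ρ k = x) (hρ : IsRun E ρ) (hS : ∀ n, k ≤ n → ρ n ∈ S)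
    (hcomp : ∀ n, k ≤ n → ρ n ∈ Vi → ρ (n + 1) = extendStrategy S σS σ (ρ n)) :
    (fun n => π (ρ n)) ∈ W := by
  rw [← hW.shift_mem_iff _ k]
  refine hx (fun n => ⟨ρ (n + k), hS _ (by omega)⟩) (Subtype.ext (by simpa using hk))
    (fun n => ?_) (fun n hn => Subtype.ext ?_)
  · change (ρ (n + k), ρ (n + 1 + k)) ∈ E
    rw [Nat.add_right_comm]
    exact hρ (n + k)
  · change ρ (n + 1 + k) = σS _
    rw [Nat.add_right_comm, hcomp (n + k) (by omega) hn, extendStrategy_of_mem]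

/-- A strategy winning in the subarena `S` would combine with a uniform strategy winning on the
player's whole region into one winning from a vertex of `S` in the whole arena. -/
theorem winRegionAll_restrictEdges_eq_empty (hW : PrefixIndependent W) (hE : ∀ v, ∃ w, (v, w) ∈ E)
    {S : Set V} (hSR : Disjoint S (WinRegionAll Vi E π W))
    (hexit : ∀ v ∈ S, v ∉ Vi → ∀ w, (v, w) ∈ E → w ∈ S ∨ w ∈ WinRegionAll Vi E π W) :
    WinRegionAll (Subtype.val ⁻¹' Vi) (restrictEdges E S) (fun y => π y) W = ∅ := by
  refine Set.eq_empty_of_forall_notMem fun x ⟨σS, hσS, hx⟩ => Set.disjoint_left.1 hSR x.2 ?_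
  obtain ⟨τ, hτ, hτR⟩ := exists_uniform_strategy (π := π) hW hE
  refine ⟨extendStrategy S σS τ, hσS.extendStrategy hτ, fun ρ h0 hρ hcomp => ?_⟩
  by_cases hstay : ∀ n, ρ n ∈ S
  · exact hx.mem_of_restrictEdges hW (k := 0) h0 hρ (fun n _ => hstay n) fun n _ => hcomp n
  simp only [not_forall] at hstay
  obtain ⟨k, hkS, hk1S⟩ : ∃ k, ρ k ∈ S ∧ ρ (k + 1) ∉ S := by
    by_contra! h
    obtain ⟨n, hn⟩ := hstay
    exact hn (Nat.rec (h0 ▸ x.2) (fun n ih => h n ih) n)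
  have hkVi : ρ k ∉ Vi := fun hvi => hk1S <| by
    rw [hcomp k hvi, extendStrategy_of_mem σS τ hkS]
    exact Subtype.coe_prop _
  have hk1R : ρ (k + 1) ∈ WinRegionAll Vi E π W :=
    (hexit _ hkS hkVi _ (hρ k)).resolve_left hk1S
  refine mem_of_compatible_on_winRegion hW (hτR hk1R) hρ fun n _ hnR hn => ?_
  rw [hcomp n hn, extendStrategy_of_notMem σS τ
    (Set.disjoint_right.1 hSR (winRegion_subset_winRegionAll hτ hnR))]

end Subarena

section Zielonka

variable {V : Type u} {C : Type*} {Vi : Set V} {E : Set (V × V)} {π : V → C} {W : Set (ℕ → C)}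

/-- Play `σY` on `Y` and attract to `N` on the attractor: a play that does not end up in `Y`
visits the attractor, hence `N`, infinitely often. -/
theorem subset_winRegionAll_of_attr (hW : PrefixIndependent W) (hE : ∀ v, ∃ w, (v, w) ∈ E)
    {X N : Set V} (hXo : ∀ v ∈ X, v ∉ Vi → ∀ w, (v, w) ∈ E → w ∈ X)
    (hXi : ∀ v ∈ X, v ∈ Vi → ∃ w, (v, w) ∈ E ∧ w ∈ X)
    (hN : ∀ ρ : ℕ → V, IsRun E ρ → (∀ m, ∃ n, m ≤ n ∧ ρ n ∈ N) → (fun n => π (ρ n)) ∈ W)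
    {Y : Set V} (hY : Y = X \ Attr Vi (E ∩ X ×ˢ X) N) {σY : Y → Y}
    (hσY : IsStrategy (Subtype.val ⁻¹' Vi) (restrictEdges E Y) σY)
    (hσYwin : ∀ y, WinsFrom (Subtype.val ⁻¹' Vi) (restrictEdges E Y) (fun y => π y) W σY y) :
    X ⊆ WinRegionAll Vi E π W := by
  classical
  set A := Attr Vi (E ∩ X ×ˢ X) N
  have hstay : ∀ v, ∃ w, (v, w) ∈ E ∧ (v ∈ X → v ∈ Vi → w ∈ X) := fun v => by
    by_cases hv : v ∈ X ∧ v ∈ Vi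
    · obtain ⟨w, hvw, hw⟩ := hXi v hv.1 hv.2
      exact ⟨w, hvw, fun _ _ => hw⟩
    · obtain ⟨w, hvw⟩ := hE v
      exact ⟨w, hvw, fun h h' => absurd ⟨h, h'⟩ hv⟩
  choose σX hσXE hσXX using hstay
  have hattr : ∀ v, ∃ w, v ∈ A → v ∉ N → v ∈ Vi → (v, w) ∈ E ∩ X ×ˢ X ∧ w ∈ A ∧
      attrRank Vi (E ∩ X ×ˢ X) N w < attrRank Vi (E ∩ X ×ˢ X) N v := fun v => by
    by_cases hv : v ∈ A ∧ v ∉ N ∧ v ∈ Vi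
    · rcases mem_attr_cases hv.1 hv.2.1 with ⟨-, w, hw⟩ | ⟨hvi, -⟩
      · exact ⟨w, fun _ _ _ => hw⟩
      · exact absurd hv.2.2 hvi
    · exact ⟨v, fun h h' h'' => absurd ⟨h, h', h''⟩ hv⟩
  choose f hf using hattr
  set σ := extendStrategy Y σY ((A \ N).piecewise f σX) with hσdef
  have hσA : ∀ v ∈ A, v ∉ N → σ v = f v := fun v hvA hvN => by
    rw [hσdef, extendStrategy_of_notMem σY _ (by rw [hY]; exact fun h => h.2 hvA),
      Set.piecewise_eq_of_mem _ _ _ (show v ∈ A \ N from ⟨hvA, hvN⟩)]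
  have hσ : IsStrategy Vi E σ := by
    refine hσY.extendStrategy fun v hv => ?_
    by_cases hvA : v ∈ A \ N
    · rw [Set.piecewise_eq_of_mem _ _ _ hvA]
      exact (hf v hvA.1 hvA.2 hv).1.1
    · rw [Set.piecewise_eq_of_notMem _ _ _ hvA]
      exact hσXE v
  have hσX : ∀ v ∈ X, v ∈ Vi → σ v ∈ X := fun v hvX hv => by
    by_cases hvY : v ∈ Y
    · rw [hσdef, extendStrategy_of_mem σY _ hvY]
      exact (hY ▸ Set.sdiff_subset : Y ⊆ X) (σY ⟨v, hvY⟩).2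
    rw [hσdef, extendStrategy_of_notMem σY _ hvY]
    by_cases hvA : v ∈ A \ N
    · rw [Set.piecewise_eq_of_mem _ _ _ hvA]
      exact (hf v hvA.1 hvA.2 hv).1.2.2
    · rw [Set.piecewise_eq_of_notMem _ _ _ hvA]
      exact hσXX v hvX hv
  refine fun v hv => ⟨σ, hσ, fun ρ h0 hρ hcomp => ?_⟩
  have hX : ∀ n, ρ n ∈ X := by
    intro n
    induction n with
    | zero => rwa [h0]
    | succ n ih =>
      by_cases hn : ρ n ∈ Vi
      · exact hcomp n hn ▸ hσX _ ih hn
      · exact hXo _ ih hn _ (hρ n)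
  by_cases hev : ∃ m, ∀ n, m ≤ n → ρ n ∈ Y
  · obtain ⟨m, hm⟩ := hev
    exact (hσYwin ⟨ρ m, hm m le_rfl⟩).mem_of_restrictEdges hW rfl hρ hm fun n _ => hcomp n
  refine hN ρ hρ fun m => ?_
  obtain ⟨n, hmn, hnY⟩ : ∃ n, m ≤ n ∧ ρ n ∉ Y := by
    by_contra! h
    exact hev ⟨m, h⟩
  have hnA : ρ n ∈ A := by
    by_contra hnA
    exact hnY (hY ▸ ⟨hX n, hnA⟩)
  obtain ⟨k, hnk, hk⟩ := exists_mem_of_mem_attr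
    (fun v hvA hvN hv => hσA v hvA hvN ▸ (hf v hvA hvN hv).2)
    (show IsRun (E ∩ X ×ˢ X) ρ from fun n => ⟨hρ n, hX n, hX (n + 1)⟩) hcomp hnA
  exact ⟨k, hmn.trans hnk, hk⟩

end Zielonka

section Parity

theorem memorylessDetermined_of_maxPriority {V : Type u} {Vi : Set V} {E : Set (V × V)}
    {π : V → ℕ} {W : Set (ℕ → ℕ)} {d : ℕ} (hW : PrefixIndependent W)
    (hd : ∀ x : ℕ → ℕ, (∀ n, x n ≤ d) → (∀ N, ∃ n, N ≤ n ∧ x n = d) → x ∈ W)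
    (IH : ∀ (V' : Type u) (Vi' : Set V') (E' : Set (V' × V')) (π' : V' → ℕ),
      (∀ v, ∃ w, (v, w) ∈ E') → (∀ v, π' v < d) → MemorylessDetermined Vi' E' π' W)
    (hE : ∀ v, ∃ w, (v, w) ∈ E) (hπ : ∀ v, π v ≤ d) : MemorylessDetermined Vi E π W := by
  set L := WinRegionAll Viᶜ E π Wᶜ
  suffices hX : Lᶜ ⊆ WinRegionAll Vi E π W from
    Set.eq_univ_of_forall fun v => (em (v ∈ L)).elim Or.inr fun hv => Or.inl (hX hv)
  have hXo : ∀ v ∈ Lᶜ, v ∉ Vi → ∀ w, (v, w) ∈ E → w ∈ Lᶜ := fun v hv hvi w hvw hw =>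
    hv (mem_winRegionAll_of_edge hW.compl hE hvi hvw hw)
  have hXi : ∀ v ∈ Lᶜ, v ∈ Vi → ∃ w, (v, w) ∈ E ∧ w ∈ Lᶜ := fun v hv _ => by
    by_contra! h
    exact hv (mem_winRegionAll_of_forall_edge hW.compl hE fun w hvw => not_not.1 (h w hvw))
  set N := Lᶜ ∩ π ⁻¹' {d}
  set A := Attr Vi (E ∩ Lᶜ ×ˢ Lᶜ) N
  set Y := Lᶜ \ A
  have hYi : ∀ v ∈ Y, v ∈ Vi → ∀ w, (v, w) ∈ E → w ∈ Y ∨ w ∈ L := fun v hv hvi w hvw =>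
    (em (w ∈ L)).elim Or.inr fun hwL => Or.inl (mem_sdiff_attr_of_edge hv hvi hvw hwL)
  have hEY : ∀ y : Y, ∃ z, (y, z) ∈ restrictEdges E Y := fun y => by
    obtain ⟨w, hyw, hw⟩ : ∃ w, ((y : V), w) ∈ E ∧ w ∈ Y := by
      by_cases hyi : (y : V) ∈ Vi
      · obtain ⟨w, hyw, hwL⟩ := hXi y y.2.1 hyi
        exact ⟨w, hyw, mem_sdiff_attr_of_edge y.2 hyi hyw hwL⟩
      · exact exists_edge_mem_sdiff_attr y.2 hyi
    exact ⟨⟨w, hw⟩, hyw⟩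
  have hπY : ∀ y : Y, π y < d := fun y =>
    (hπ y).lt_of_ne fun h => y.2.2 (subset_attr ⟨y.2.1, h⟩)
  have hYempty := winRegionAll_restrictEdges_eq_empty (π := π) hW.compl hE
    (Set.disjoint_left.2 fun v hv => hv.1) fun v hv hvi => hYi v hv (not_not.1 hvi)
  have hYwin :
      ∀ y : Y, y ∈ WinRegionAll (Subtype.val ⁻¹' Vi) (restrictEdges E Y) (fun y => π y) W :=
    fun y => ((IH Y _ _ _ hEY hπY).symm ▸ Set.mem_univ y).resolve_right
      (Set.eq_empty_iff_forall_notMem.1 hYempty y)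
  obtain ⟨σY, hσY, hσYR⟩ := exists_uniform_strategy hW hEY
  exact subset_winRegionAll_of_attr hW hE hXo hXi
    (fun ρ _ hρN => hd _ (fun n => hπ _) fun m => (hρN m).imp fun n hn => ⟨hn.1, hn.2.2⟩)
    rfl hσY fun y => hσYR (hYwin y)

theorem memorylessDetermined_parityWin (B : ℕ) {V : Type u} (V0 : Set V) (E : Set (V × V))
    (π : V → ℕ) (hE : ∀ v, ∃ w, (v, w) ∈ E) (hπ : ∀ v, π v < B) :
    MemorylessDetermined V0 E π ParityWin := by
  induction B generalizing V with
  | zero => exact Set.eq_univ_of_forall fun v => absurd (hπ v) (Nat.not_lt_zero _)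
  | succ d IH =>
    have hmax : ∀ x : ℕ → ℕ, (∀ n, x n ≤ d) → (∀ N, ∃ n, N ≤ n ∧ x n = d) → MaxInf x = d :=
      fun _ => maxInf_eq_of_frequently_eq
    rcases Nat.even_or_odd d with hd | hd
    · exact memorylessDetermined_of_maxPriority prefixIndependent_parityWin
        (fun x hle hfreq => show Even (MaxInf x) from (hmax x hle hfreq).symm ▸ hd)
        (fun V' Vi' E' π' hE' hπ' => IH Vi' E' π' hE' hπ') hE fun v => Nat.lt_succ_iff.1 (hπ v)
    · rw [← memorylessDetermined_compl_iff]
      exact memorylessDetermined_of_maxPriority prefixIndependent_parityWin.compl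
        (fun x hle hfreq => by simpa [ParityWin, hmax x hle hfreq, Nat.not_even_iff_odd])
        (fun V' Vi' E' π' hE' hπ' => by
          simpa only [compl_compl] using memorylessDetermined_compl_iff.2 (IH Vi'ᶜ E' π' hE' hπ'))
        hE fun v => Nat.lt_succ_iff.1 (hπ v)

end Parity

/-- every parity game with finitely many priorities is uniformly
memoryless determined. -/
theorem stmt4 {V : Type*} (V0 V1 : Set V) (E : Set (V × V)) (π : V → ℕ)
    (hdisj : Disjoint V0 V1) (hcover : V0 ∪ V1 = Set.univ)
    (hE : ∀ v : V, ∃ u, (v, u) ∈ E)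
    (hbdd : ∃ B, ∀ v, π v ≤ B) :
    UniformlyDetermined V0 V1 E π ParityWin := by
  obtain ⟨B, hB⟩ := hbdd
  obtain rfl : V0ᶜ = V1 := (IsCompl.of_eq hdisj.eq_bot hcover).compl_eq
  exact (memorylessDetermined_parityWin (B + 1) V0 E π hE fun v => Nat.lt_succ_of_le (hB v)
    ).uniformlyDetermined prefixIndependent_parityWin hE
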